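/- Darboux criterion for invariants (Theorem on Darboux integrability, statement (b)): let U ⊆ ℝ² be open, let P, Q : ℝ² → ℝ be continuous, let p ∈ ℕ, and for i = 1, …, p let fᵢ : ℝ² → ℝ be differentiable with fᵢ > 0 on U, let Kᵢ : ℝ² → ℝ satisfy P·∂fᵢ/∂x + Q·∂fᵢ/∂y = Kᵢ·fᵢ on U. Let λ₁, …, λ_p ∈ ℝ and s ∈ ℝ with Σᵢ λᵢ Kᵢ = −s on U. Then for every solution (x(t), y(t)) of ẋ = P(x,y), ẏ = Q(x,y) defined on an open interval I with (x(t), y(t)) ∈ U for all t ∈ I, the function t ↦ (∏ᵢ fᵢ(x(t), y(t))^{λᵢ})·Real.exp(s·t) is constant on I. -/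

import Mathlib

/-!
Along a solution `γ = (x, y)`, each `fᵢ` satisfies `(fᵢ ∘ γ)' = Kᵢ · (fᵢ ∘ γ)` by the chain rule, so
`(log fᵢ ∘ γ)' = Kᵢ ∘ γ`. Hence the logarithm `∑ λᵢ log fᵢ(γ t) + s t` of the Darboux function
has derivative `∑ λᵢ Kᵢ + s = 0` and is constant on the interval.
-/

open Real

theorem ContinuousLinearMap.map_prod_eq_smul_add_smul {R M : Type*} [Semiring R]
    [TopologicalSpace R] [AddCommMonoid M] [Module R M] [TopologicalSpace M]
    (L : R × R →L[R] M) (a b : R) : L (a, b) = a • L (1, 0) + b • L (0, 1) := by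
  rw [← map_smul, ← map_smul, ← map_add]
  simp

theorem IsPreconnected.eq_of_hasDerivAt_eq_zero {E : Type*} [NormedAddCommGroup E]
    [NormedSpace ℝ E] {f : ℝ → E} {s : Set ℝ} (hs : IsPreconnected s)
    (hf : ∀ t ∈ s, HasDerivAt f 0 t) {a b : ℝ} (ha : a ∈ s) (hb : b ∈ s) : f a = f b := by
  have := hs.ordConnected.convex.norm_image_sub_le_of_norm_hasDerivWithin_le
    (fun t ht => (hf t ht).hasDerivWithinAt) (fun _ _ => (norm_zero (E := E)).le) ha hb
  rw [zero_mul, norm_le_zero_iff, sub_eq_zero] at this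
  exact this.symm

theorem Real.prod_rpow_eq_exp_sum_mul_log {ι : Type*} (s : Finset ι) {a w : ι → ℝ}
    (ha : ∀ i ∈ s, 0 < a i) : ∏ i ∈ s, a i ^ w i = exp (∑ i ∈ s, w i * log (a i)) := by
  rw [exp_sum]
  refine Finset.prod_congr rfl fun i hi => ?_
  rw [rpow_def_of_pos (ha i hi), mul_comm]

section Cofactor

variable {f : ℝ × ℝ → ℝ} {x y : ℝ → ℝ} {t a b k : ℝ}

theorem hasDerivAt_comp_of_cofactor (hf : DifferentiableAt ℝ f (x t, y t))
    (hcof : a * fderiv ℝ f (x t, y t) (1, 0) + b * fderiv ℝ f (x t, y t) (0, 1) =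
      k * f (x t, y t))
    (hx : HasDerivAt x a t) (hy : HasDerivAt y b t) :
    HasDerivAt (fun t => f (x t, y t)) (k * f (x t, y t)) t := by
  have := hf.hasFDerivAt.comp_hasDerivAt t (hx.prodMk hy)
  rwa [ContinuousLinearMap.map_prod_eq_smul_add_smul, smul_eq_mul, smul_eq_mul, hcof] at this

theorem hasDerivAt_log_comp_of_cofactor (hf : DifferentiableAt ℝ f (x t, y t))
    (hpos : 0 < f (x t, y t))
    (hcof : a * fderiv ℝ f (x t, y t) (1, 0) + b * fderiv ℝ f (x t, y t) (0, 1) =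
      k * f (x t, y t))
    (hx : HasDerivAt x a t) (hy : HasDerivAt y b t) :
    HasDerivAt (fun t => log (f (x t, y t))) k t := by
  have := (hasDerivAt_comp_of_cofactor hf hcof hx hy).log hpos.ne'
  rwa [mul_div_cancel_right₀ _ hpos.ne'] at this

end Cofactor

theorem darboux_invariant_criterion_general
    (U : Set (ℝ × ℝ)) (P Q : ℝ × ℝ → ℝ)
    (p : ℕ) (f K : Fin p → ℝ × ℝ → ℝ)
    (hfd : ∀ i, ∀ z ∈ U, DifferentiableAt ℝ (f i) z)
    (hfpos : ∀ i, ∀ z ∈ U, 0 < f i z)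
    (hcof : ∀ i, ∀ z ∈ U,
      P z * fderiv ℝ (f i) z (1, 0) + Q z * fderiv ℝ (f i) z (0, 1) = K i z * f i z)
    (lam : Fin p → ℝ) (s : ℝ)
    (hsum : ∀ z ∈ U, ∑ i, lam i * K i z = -s)
    (I : Set ℝ) (hIconn : IsPreconnected I)
    (x y : ℝ → ℝ)
    (hx : ∀ t ∈ I, HasDerivAt x (P (x t, y t)) t)
    (hy : ∀ t ∈ I, HasDerivAt y (Q (x t, y t)) t)
    (hmem : ∀ t ∈ I, (x t, y t) ∈ U) :
    ∀ t ∈ I, ∀ t' ∈ I,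
      (∏ i, f i (x t, y t) ^ lam i) * Real.exp (s * t) =
        (∏ i, f i (x t', y t') ^ lam i) * Real.exp (s * t') := by
  set g : ℝ → ℝ := fun t => ∑ i, lam i * log (f i (x t, y t)) + s * t
  have hg : ∀ t ∈ I, HasDerivAt g 0 t := by
    intro t ht
    have hz := hmem t ht
    have hlog (i : Fin p) :
        HasDerivAt (fun t => lam i * log (f i (x t, y t))) (lam i * K i (x t, y t)) t :=
      (hasDerivAt_log_comp_of_cofactor (hfd i _ hz) (hfpos i _ hz) (hcof i _ hz)
        (hx t ht) (hy t ht)).const_mul (lam i)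
    have := (HasDerivAt.fun_sum (u := Finset.univ) fun i _ => hlog i).add ((hasDerivAt_id t).const_mul s)
    rwa [hsum _ hz, mul_one, neg_add_cancel] at this
  have hexp : ∀ t ∈ I, (∏ i, f i (x t, y t) ^ lam i) * exp (s * t) = exp (g t) := fun t ht => by
    rw [prod_rpow_eq_exp_sum_mul_log _ fun i _ => hfpos i _ (hmem t ht), ← exp_add]
  intro t ht t' ht'
  rw [hexp t ht, hexp t' ht', hIconn.eq_of_hasDerivAt_eq_zero hg ht ht']

/-- Darboux criterion for invariants: if `fᵢ > 0` are differentiable on an open set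
`U` with cofactors `Kᵢ` for the vector field `(P, Q)` and `∑ λᵢ Kᵢ = −s` on `U`,
then along every solution `(x(t), y(t))` of `ẋ = P`, `ẏ = Q` staying in `U`, the
function `t ↦ (∏ fᵢ(x(t),y(t))^(λᵢ)) · exp(s t)` is constant. -/
theorem darboux_invariant_criterion
    (U : Set (ℝ × ℝ)) (hU : IsOpen U) (P Q : ℝ × ℝ → ℝ)
    (hP : ContinuousOn P U) (hQ : ContinuousOn Q U)
    (p : ℕ) (f K : Fin p → ℝ × ℝ → ℝ)
    (hfd : ∀ i, ∀ z ∈ U, DifferentiableAt ℝ (f i) z)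
    (hfpos : ∀ i, ∀ z ∈ U, 0 < f i z)
    (hcof : ∀ i, ∀ z ∈ U,
      P z * fderiv ℝ (f i) z (1, 0) + Q z * fderiv ℝ (f i) z (0, 1) = K i z * f i z)
    (lam : Fin p → ℝ) (s : ℝ)
    (hsum : ∀ z ∈ U, ∑ i, lam i * K i z = -s)
    (I : Set ℝ) (hIopen : IsOpen I) (hIconn : IsPreconnected I)
    (x y : ℝ → ℝ)
    (hx : ∀ t ∈ I, HasDerivAt x (P (x t, y t)) t)
    (hy : ∀ t ∈ I, HasDerivAt y (Q (x t, y t)) t)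
    (hmem : ∀ t ∈ I, (x t, y t) ∈ U) :
    ∀ t ∈ I, ∀ t' ∈ I,
      (∏ i, f i (x t, y t) ^ lam i) * Real.exp (s * t) =
        (∏ i, f i (x t', y t') ^ lam i) * Real.exp (s * t') :=
  darboux_invariant_criterion_general U P Q p f K hfd hfpos hcof lam s hsum I hIconn x y hx hy hmem
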